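/- arXiv:2311.14623 — 3 statements merged into one kernel-verified Lean document; each statement's English description precedes it below -/
import Mathlib

section
/- Let n be a natural number and let a, b be integers with gcd(a,b) = 1, b ≠ 0, and b ≠ ±1. Define the generalized Motzkin number M_{2n+1}(a,b) = ∑_{k=0}^{n} C(2n+1,2k) · Cat_k · a^k · b^{2n+1-2k}, where Cat_k is the k-th Catalan number. Then M_{2n+1}(a,b) ≠ 0, and the largest natural number e such that b^e divides M_{2n+1}(a,b) is equal to 1 plus the largest natural number e such that b^e divides the integer (2n+1)·Cat_n. -/
open Finset

private lemma cat_fac (j : ℕ) :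
    catalan j * (j.factorial * (j+1).factorial) = (2*j).factorial := by
  have h := succ_mul_catalan_eq_centralBinom j
  have h2 := Nat.choose_mul_factorial_mul_factorial (show j ≤ 2*j by omega)
  have h3 : 2*j - j = j := by omega
  rw [h3] at h2
  have h4 : Nat.centralBinom j = (2*j).choose j := rfl
  calc catalan j * (j.factorial * (j+1).factorial)
      = ((j+1) * catalan j) * j.factorial * j.factorial := by
        rw [Nat.factorial_succ]; ring
    _ = (2*j).choose j * j.factorial * j.factorial := by rw [h, h4]
    _ = (2*j).factorial := h2

private lemma catalan_ne (j : ℕ) : catalan j ≠ 0 := by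
  intro h
  have h2 := cat_fac j
  rw [h, zero_mul] at h2
  exact (Nat.factorial_ne_zero _) h2.symm

private lemma nar (k m : ℕ) :
    ((k+m+1).choose k * (k+m+2).choose (k+1) - (k+m+1).choose (k+1) * (k+m+2).choose k) *
      (k.factorial * (k+1).factorial * (m+1).factorial * (m+2).factorial)
      = (k+m+1).factorial * (k+m+2).factorial := by
  have h1 : (k+m+1).choose k * k.factorial * (m+1).factorial = (k+m+1).factorial := by
    have h := Nat.choose_mul_factorial_mul_factorial (show k ≤ k+m+1 by omega)
    simpa [show k+m+1-k = m+1 by omega] using h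
  have h2 : (k+m+2).choose (k+1) * (k+1).factorial * (m+1).factorial = (k+m+2).factorial := by
    have h := Nat.choose_mul_factorial_mul_factorial (show k+1 ≤ k+m+2 by omega)
    simpa [show k+m+2-(k+1) = m+1 by omega] using h
  have h3 : (k+m+1).choose (k+1) * (k+1).factorial * m.factorial = (k+m+1).factorial := by
    have h := Nat.choose_mul_factorial_mul_factorial (show k+1 ≤ k+m+1 by omega)
    simpa [show k+m+1-(k+1) = m by omega] using h
  have h4 : (k+m+2).choose k * k.factorial * (m+2).factorial = (k+m+2).factorial := by
    have h := Nat.choose_mul_factorial_mul_factorial (show k ≤ k+m+2 by omega)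
    simpa [show k+m+2-k = m+2 by omega] using h
  have e1 : (k+m+1).choose k * (k+m+2).choose (k+1) *
      (k.factorial * (k+1).factorial * (m+1).factorial * (m+2).factorial)
      = (k+m+1).factorial * (k+m+2).factorial * (m+2) := by
    rw [← h1, ← h2, Nat.factorial_succ (m+1)]; ring
  have e2 : (k+m+1).choose (k+1) * (k+m+2).choose k *
      (k.factorial * (k+1).factorial * (m+1).factorial * (m+2).factorial)
      = (k+m+1).factorial * (k+m+2).factorial * (m+1) := by
    rw [← h3, ← h4, Nat.factorial_succ m]; ring
  rw [Nat.sub_mul, e1, e2]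
  have e3 : (k+m+1).factorial * (k+m+2).factorial * (m+2)
      = (k+m+1).factorial * (k+m+2).factorial * (m+1)
        + (k+m+1).factorial * (k+m+2).factorial := by ring
  rw [e3, Nat.add_sub_cancel_left]

private lemma dvdA (k m : ℕ) :
    (2*(k+m+1)+1) * catalan (k+m+1) ∣
      (2*(k+m+1)+1).choose (2*k) * catalan k * (2*m+3).choose (m+1) := by
  refine ⟨(k+m+1).choose k * (k+m+2).choose (k+1) - (k+m+1).choose (k+1) * (k+m+2).choose k, ?_⟩
  have hD0 : 0 < k.factorial * (k+1).factorial * (m+1).factorial * (m+2).factorial := by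
    positivity
  apply Nat.eq_of_mul_eq_mul_right hD0
  have hc1 : (2*(k+m+1)+1).choose (2*k) * (2*k).factorial * (2*m+3).factorial
      = (2*(k+m+1)+1).factorial := by
    have h := Nat.choose_mul_factorial_mul_factorial (show 2*k ≤ 2*(k+m+1)+1 by omega)
    simpa [show 2*(k+m+1)+1-2*k = 2*m+3 by omega] using h
  have hc2 : (2*m+3).choose (m+1) * (m+1).factorial * (m+2).factorial = (2*m+3).factorial := by
    have h := Nat.choose_mul_factorial_mul_factorial (show m+1 ≤ 2*m+3 by omega)
    simpa [show 2*m+3-(m+1) = m+2 by omega] using h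
  have hc3 := cat_fac k
  have step1 : (2*(k+m+1)+1).choose (2*k) * catalan k * (2*m+3).choose (m+1) *
      (k.factorial * (k+1).factorial * (m+1).factorial * (m+2).factorial)
      = (2*(k+m+1)+1).factorial := by
    rw [← hc1, ← hc2, ← hc3]; ring
  have hnar := nar k m
  have hcatn := cat_fac (k+m+1)
  have step2 : (2*(k+m+1)+1) * catalan (k+m+1) *
      ((k+m+1).choose k * (k+m+2).choose (k+1) - (k+m+1).choose (k+1) * (k+m+2).choose k) *
      (k.factorial * (k+1).factorial * (m+1).factorial * (m+2).factorial)
      = (2*(k+m+1)+1).factorial := by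
    have e : (2*(k+m+1)+1) * catalan (k+m+1) *
        ((k+m+1).choose k * (k+m+2).choose (k+1) - (k+m+1).choose (k+1) * (k+m+2).choose k) *
        (k.factorial * (k+1).factorial * (m+1).factorial * (m+2).factorial)
        = (2*(k+m+1)+1) * (catalan (k+m+1) *
          (((k+m+1).choose k * (k+m+2).choose (k+1) - (k+m+1).choose (k+1) * (k+m+2).choose k) *
          (k.factorial * (k+1).factorial * (m+1).factorial * (m+2).factorial))) := by ring
    rw [e, hnar]
    have e2 : (k+m+1).factorial * (k+m+2).factorial
        = (k+m+1).factorial * ((k+m+1)+1).factorial := by norm_num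
    rw [e2, hcatn]
    have e3 : 2*(k+m+1)+1 = (2*(k+m+1)) + 1 := rfl
    rw [e3, Nat.factorial_succ]
  rw [step1, step2]

private lemma pow_bound (m : ℕ) : 2*m+3 < 2^(2*m+2) := by
  have h := Nat.lt_two_pow_self (n := 2*m+1)
  have h2 : (2:ℕ)^(2*m+2) = 2 * 2^(2*m+1) := by ring
  rw [h2]
  omega

private lemma choose_fact_le (m p : ℕ) :
    ((2*m+3).choose (m+1)).factorization p ≤ 2*m+1 := by
  refine Nat.factorization_choose_le_log.trans ?_
  have h2 : Nat.log 2 (2*m+3) ≤ 2*m+1 := by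
    have h := Nat.log_lt_of_lt_pow (show 2*m+3 ≠ 0 by omega) (pow_bound m)
    omega
  rcases le_or_gt 2 p with hp | hp
  · exact (Nat.log_anti_left one_lt_two hp).trans h2
  · rw [Nat.log_of_left_le_one (by omega : p ≤ 1)]
    omega

private lemma KL (c e k m : ℕ) (hc : 2 ≤ c)
    (h : c^e ∣ (2*(k+m+1)+1) * catalan (k+m+1)) :
    c^e ∣ (2*(k+m+1)+1).choose (2*k) * catalan k * c^(2*m+1) := by
  have hc0 : c ≠ 0 := by omega
  have hN : (2*(k+m+1)+1) * catalan (k+m+1) ≠ 0 :=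
    mul_ne_zero (by omega) (catalan_ne _)
  have hTk : (2*(k+m+1)+1).choose (2*k) * catalan k ≠ 0 :=
    mul_ne_zero (Nat.choose_pos (by omega)).ne' (catalan_ne _)
  have hC : (2*m+3).choose (m+1) ≠ 0 := (Nat.choose_pos (by omega)).ne'
  rw [← Nat.factorization_le_iff_dvd (pow_ne_zero _ hc0)
    (mul_ne_zero hTk (pow_ne_zero _ hc0)), Finsupp.le_def]
  intro p
  rw [Nat.factorization_mul hTk (pow_ne_zero _ hc0)]
  simp only [Nat.factorization_pow, Finsupp.smul_apply, Finsupp.add_apply, smul_eq_mul]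
  by_cases hp : c.factorization p = 0
  · simp [hp]
  · have hp1 : 0 < c.factorization p := Nat.pos_of_ne_zero hp
    have l1 : e * c.factorization p ≤ ((2*(k+m+1)+1) * catalan (k+m+1)).factorization p := by
      have hle := (Nat.factorization_le_iff_dvd (pow_ne_zero _ hc0) hN).mpr h
      have := Finsupp.le_def.mp hle p
      simpa [Nat.factorization_pow] using this
    have l2 : ((2*(k+m+1)+1) * catalan (k+m+1)).factorization p ≤
        ((2*(k+m+1)+1).choose (2*k) * catalan k * (2*m+3).choose (m+1)).factorization p := by
      have hle := (Nat.factorization_le_iff_dvd hN (mul_ne_zero hTk hC)).mpr (dvdA k m)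
      exact Finsupp.le_def.mp hle p
    have l3 : ((2*(k+m+1)+1).choose (2*k) * catalan k * (2*m+3).choose (m+1)).factorization p
        = ((2*(k+m+1)+1).choose (2*k) * catalan k).factorization p
          + ((2*m+3).choose (m+1)).factorization p := by
      rw [Nat.factorization_mul hTk hC]; simp
    have l4 := choose_fact_le m p
    have l5 : 2*m+1 ≤ (2*m+1) * c.factorization p := Nat.le_mul_of_pos_right _ hp1
    calc e * c.factorization p
        ≤ ((2*(k+m+1)+1).choose (2*k) * catalan k).factorization p
          + ((2*m+3).choose (m+1)).factorization p := by rw [← l3]; exact l1.trans l2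
      _ ≤ ((2*(k+m+1)+1).choose (2*k) * catalan k).factorization p + (2*m+1) :=
          Nat.add_le_add_left l4 _
      _ ≤ ((2*(k+m+1)+1).choose (2*k) * catalan k).factorization p
          + (2*m+1) * c.factorization p := Nat.add_le_add_left l5 _

/-- Theorem 6, Eq. (28.4): for coprime `a b` with `b ∉ {0, 1, -1}`, the generalized
Motzkin number `M_{2n+1}(a,b) = ∑_{k=0}^{n} C(2n+1,2k) Cat_k a^k b^{2n+1-2k}` is nonzero,
and the largest power of `b` dividing it equals `1` plus the largest power of `b`
dividing `(2n+1)·Cat_n`. -/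
theorem stmt_14 (n : ℕ) (a b : ℤ) (hab : Int.gcd a b = 1)
    (h0 : b ≠ 0) (h1 : b ≠ 1) (h2 : b ≠ -1) :
    (∑ k ∈ range (n + 1),
      ((2 * n + 1).choose (2 * k) : ℤ) * (catalan k : ℤ) * a ^ k * b ^ (2 * n + 1 - 2 * k)) ≠ 0 ∧
    ∃ E : ℕ,
      IsGreatest {e : ℕ | b ^ e ∣ ((2 * n + 1 : ℕ) * catalan n : ℤ)} E ∧
      IsGreatest {e : ℕ | b ^ e ∣
        ∑ k ∈ range (n + 1),
          ((2 * n + 1).choose (2 * k) : ℤ) * (catalan k : ℤ) * a ^ k *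
            b ^ (2 * n + 1 - 2 * k)} (1 + E) := by
  have hb2 : 2 ≤ b.natAbs := by omega
  set c := b.natAbs with hc
  set N := (2*n+1) * catalan n with hN
  have hN0 : N ≠ 0 := mul_ne_zero (by omega) (catalan_ne n)
  have bound : ∀ e : ℕ, c^e ∣ N → e ≤ N := by
    intro e he
    have hb1 : c^e ≤ N := Nat.le_of_dvd (Nat.pos_of_ne_zero hN0) he
    have hb2' : e < 2^e := Nat.lt_two_pow_self (n := e)
    have hb3 : 2^e ≤ c^e := Nat.pow_le_pow_left hb2 e
    omega
  set E := Nat.findGreatest (fun e => c^e ∣ N) N with hE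
  have hEdvd : c^E ∣ N := by
    have h := Nat.findGreatest_spec (P := fun e => c^e ∣ N) (m := 0) (Nat.zero_le N) (by simp)
    simpa [← hE] using h
  have hEmax : ∀ e, c^e ∣ N → e ≤ E := fun e he => Nat.le_findGreatest (bound e he) he
  have hnotE1 : ¬ c^(E+1) ∣ N := fun h => by have := hEmax _ h; omega
  have habs : ∀ (e : ℕ) (z : ℤ), b^e ∣ z ↔ c^e ∣ z.natAbs := by
    intro e z
    rw [← Int.natAbs_dvd_natAbs, Int.natAbs_pow]
  -- per-term divisibility for k < n
  have term_dvd : ∀ k, k < n → (b^(E+2) : ℤ) ∣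
      ((2 * n + 1).choose (2 * k) : ℤ) * (catalan k : ℤ) * a ^ k * b ^ (2 * n + 1 - 2 * k) := by
    intro k hk
    obtain ⟨m, hm⟩ : ∃ m, n = k+m+1 := ⟨n-k-1, by omega⟩
    have hexp : 2*n+1-2*k = 2*m+3 := by omega
    have hKL : c^E ∣ (2*n+1).choose (2*k) * catalan k * c^(2*m+1) := by
      have h := KL c E k m hb2 (by rw [hN, hm] at hEdvd; exact hEdvd)
      rw [← hm] at h
      exact h
    have hKL2 : c^(E+2) ∣ (2*n+1).choose (2*k) * catalan k * c^(2*m+3) := by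
      have := mul_dvd_mul hKL (dvd_refl (c^2))
      calc c^(E+2) = c^E * c^2 := by ring
        _ ∣ (2*n+1).choose (2*k) * catalan k * c^(2*m+1) * c^2 := this
        _ = (2*n+1).choose (2*k) * catalan k * c^(2*m+3) := by ring
    rw [habs]
    have hab2 : (((2 * n + 1).choose (2 * k) : ℤ) * (catalan k : ℤ) * a ^ k *
        b ^ (2 * n + 1 - 2 * k)).natAbs
        = (2*n+1).choose (2*k) * catalan k * c^(2*n+1-2*k) * a.natAbs ^ k := by
      simp [Int.natAbs_mul, Int.natAbs_pow]; ring
    rw [hab2, hexp]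
    exact (hKL2.mul_right _)
  -- last term
  have hch : (2*n+1).choose (2*n) = 2*n+1 := by
    have h := Nat.choose_symm (show 1 ≤ 2*n+1 by omega)
    rw [show 2*n+1-1 = 2*n by omega, Nat.choose_one_right] at h
    exact h
  have heq : ((2 * n + 1).choose (2 * n) : ℤ) * (catalan n : ℤ) * a ^ n *
      b ^ (2 * n + 1 - 2 * n) = ((N : ℤ) * a ^ n) * b := by
    rw [show 2*n+1-2*n = 1 by omega]
    push_cast [hch, hN]
    ring
  have hlast1 : (b^(E+1) : ℤ) ∣
      ((2 * n + 1).choose (2 * n) : ℤ) * (catalan n : ℤ) * a ^ n * b ^ (2 * n + 1 - 2 * n) := by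
    rw [heq, habs]
    have habs2 : (((N : ℤ) * a ^ n) * b).natAbs = N * a.natAbs ^ n * c := by
      simp [Int.natAbs_mul, Int.natAbs_pow, hc]
    rw [habs2, show E+1 = E+1 from rfl]
    calc c^(E+1) = c^E * c := by ring
      _ ∣ N * c := mul_dvd_mul hEdvd dvd_rfl
      _ ∣ N * a.natAbs ^ n * c := ⟨a.natAbs ^ n, by ring⟩
  have hlastnot : ¬ (b^(E+2) : ℤ) ∣
      ((2 * n + 1).choose (2 * n) : ℤ) * (catalan n : ℤ) * a ^ n * b ^ (2 * n + 1 - 2 * n) := by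
    intro hdvd
    rw [heq] at hdvd
    have hdvd2 : (b^(E+1) : ℤ) ∣ (N : ℤ) * a ^ n := by
      have hsplit : (b^(E+2) : ℤ) = b^(E+1) * b := by ring
      rw [hsplit] at hdvd
      exact (mul_dvd_mul_iff_right h0).mp hdvd
    have hco : IsCoprime a b := Int.isCoprime_iff_gcd_eq_one.mpr hab
    have hco2 : IsCoprime ((b:ℤ)^(E+1)) (a ^ n) := hco.symm.pow
    have hdvd3 : (b^(E+1) : ℤ) ∣ (N : ℤ) := hco2.dvd_of_dvd_mul_right hdvd2
    rw [habs] at hdvd3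
    simp only [Int.natAbs_natCast] at hdvd3
    exact hnotE1 hdvd3
  -- assemble
  have hsum2 : (b^(E+2) : ℤ) ∣ ∑ k ∈ range n,
      ((2 * n + 1).choose (2 * k) : ℤ) * (catalan k : ℤ) * a ^ k * b ^ (2 * n + 1 - 2 * k) :=
    Finset.dvd_sum fun k hk => term_dvd k (mem_range.mp hk)
  have hsplit : (∑ k ∈ range (n + 1),
      ((2 * n + 1).choose (2 * k) : ℤ) * (catalan k : ℤ) * a ^ k * b ^ (2 * n + 1 - 2 * k))
      = (∑ k ∈ range n,
        ((2 * n + 1).choose (2 * k) : ℤ) * (catalan k : ℤ) * a ^ k * b ^ (2 * n + 1 - 2 * k))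
        + ((2 * n + 1).choose (2 * n) : ℤ) * (catalan n : ℤ) * a ^ n *
            b ^ (2 * n + 1 - 2 * n) := Finset.sum_range_succ _ n
  have hS1 : (b^(E+1) : ℤ) ∣ ∑ k ∈ range (n + 1),
      ((2 * n + 1).choose (2 * k) : ℤ) * (catalan k : ℤ) * a ^ k * b ^ (2 * n + 1 - 2 * k) := by
    rw [hsplit]
    exact dvd_add ((pow_dvd_pow b (by omega)).trans hsum2) hlast1
  have hSnot : ¬ (b^(E+2) : ℤ) ∣ ∑ k ∈ range (n + 1),
      ((2 * n + 1).choose (2 * k) : ℤ) * (catalan k : ℤ) * a ^ k * b ^ (2 * n + 1 - 2 * k) := by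
    intro h
    rw [hsplit] at h
    have := (dvd_sub h hsum2)
    simp only [add_sub_cancel_left] at this
    exact hlastnot this
  have hSne : (∑ k ∈ range (n + 1),
      ((2 * n + 1).choose (2 * k) : ℤ) * (catalan k : ℤ) * a ^ k * b ^ (2 * n + 1 - 2 * k)) ≠ 0 := by
    intro h
    exact hSnot (h ▸ dvd_zero _)
  refine ⟨hSne, E, ⟨?_, ?_⟩, ⟨?_, ?_⟩⟩
  · show b^E ∣ ((2 * n + 1 : ℕ) * catalan n : ℤ)
    rw [habs]
    simpa only [Int.natAbs_mul, Int.natAbs_natCast, ← hN] using hEdvd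
  · intro e he
    simp only [Set.mem_setOf_eq] at he
    rw [habs] at he
    refine hEmax e ?_
    simpa only [Int.natAbs_mul, Int.natAbs_natCast, ← hN] using he
  · show (b^(1+E) : ℤ) ∣ _
    rw [show 1+E = E+1 by omega]
    exact hS1
  · intro e he
    simp only [Set.mem_setOf_eq] at he
    by_contra hgt
    push_neg at hgt
    exact hSnot ((pow_dvd_pow b (by omega : E+2 ≤ e)).trans he)
end

section
/- Let p be an odd prime and let n be a positive natural number. Then the p-adic valuation of the integer (∏_{k=2}^{p-1} (k·n + 1)) · C(2n,n) is at most n, i.e., v_p((∏_{k=2}^{p-1} (kn+1)) · C(2n,n)) ≤ n. -/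
open Finset

private lemma pow3 (a : ℕ) (ha : 2 ≤ a) : 2 * a + 2 ≤ 3 ^ a := by
  induction a with
  | zero => omega
  | succ b ih =>
    rcases Nat.lt_or_ge b 2 with hb | hb
    · interval_cases b
      · omega
      · norm_num
    · have h1 := ih hb
      have h2 : 1 ≤ 3 ^ b := Nat.one_le_pow _ _ (by norm_num)
      have h3 : 3 ^ (b + 1) = 3 * 3 ^ b := by ring
      omega

private lemma arith (n : ℕ) (hn : 0 < n) :
    Nat.log 3 (2 * n) + (1 + Nat.log 3 n) ≤ n := by
  have h2n : Nat.log 3 (2 * n) ≤ Nat.log 3 n + 1 := by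
    calc Nat.log 3 (2 * n) ≤ Nat.log 3 (n * 3) := Nat.log_mono_right (by omega)
    _ = Nat.log 3 n + 1 := Nat.log_mul_base (by norm_num) (by omega)
  have hpow : 3 ^ Nat.log 3 n ≤ n := Nat.pow_log_le_self 3 (by omega)
  rcases Nat.lt_or_ge n 4 with h4 | h4
  · have l1 : Nat.log 3 n ≤ 1 := by
      have := (Nat.log_lt_iff_lt_pow (by norm_num) (by omega)).mpr
        (show n < 3 ^ 2 by omega)
      omega
    have l2 : Nat.log 3 (2 * n) ≤ 1 := by
      have := (Nat.log_lt_iff_lt_pow (by norm_num) (show 2 * n ≠ 0 by omega)).mpr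
        (show 2 * n < 3 ^ 2 by omega)
      omega
    interval_cases n
    · have e1 : Nat.log 3 1 = 0 := Nat.log_eq_zero_iff.mpr (by norm_num)
      have e2 : Nat.log 3 (2 * 1) = 0 := Nat.log_eq_zero_iff.mpr (by norm_num)
      omega
    · have e1 : Nat.log 3 2 = 0 := Nat.log_eq_zero_iff.mpr (by norm_num)
      omega
    · omega
  · rcases Nat.lt_or_ge (Nat.log 3 n) 2 with ha | ha
    · omega
    · have := pow3 (Nat.log 3 n) ha
      omega

/-- Remark 1, Eq. (47): for an odd prime `p` and `n ≥ 1`,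
`v_p((∏_{k=2}^{p-1} (kn+1)) · C(2n,n)) ≤ n`. -/
theorem stmt_18 (p : ℕ) (hp : p.Prime) (hodd : Odd p) (n : ℕ) (hn : 0 < n) :
    padicValNat p ((∏ k ∈ Icc 2 (p - 1), (k * n + 1)) * (2 * n).choose n) ≤ n := by
  haveI : Fact p.Prime := ⟨hp⟩
  have hp3 : 3 ≤ p := by
    have h2 := hp.two_le
    rcases hodd with ⟨m, hm⟩
    omega
  have hprodne : (∏ k ∈ Icc 2 (p - 1), (k * n + 1)) ≠ 0 :=
    Finset.prod_ne_zero_iff.mpr (fun k _ => by omega)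
  have hchoosene : (2 * n).choose n ≠ 0 := (Nat.choose_pos (by omega)).ne'
  rw [padicValNat.mul hprodne hchoosene]
  -- bound on choose part
  have hv2 : padicValNat p ((2 * n).choose n) ≤ Nat.log 3 (2 * n) := by
    rw [← Nat.factorization_def _ hp]
    have h1 : ((2 * n).choose n).factorization p ≤ Nat.log p (2 * n) :=
      Nat.factorization_choose_le_log
    have h2 : p ^ ((2 * n).choose n).factorization p ≤ 2 * n :=
      calc p ^ ((2 * n).choose n).factorization p ≤ p ^ Nat.log p (2 * n) :=
            Nat.pow_le_pow_right hp.pos h1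
        _ ≤ 2 * n := Nat.pow_log_le_self p (by omega)
    have h3 : 3 ^ ((2 * n).choose n).factorization p ≤ 2 * n :=
      le_trans (Nat.pow_le_pow_left hp3 _) h2
    exact (Nat.le_log_iff_pow_le (b := 3) (by norm_num) (by omega)).mpr h3
  -- bound on product part
  have hv1 : padicValNat p (∏ k ∈ Icc 2 (p - 1), (k * n + 1)) ≤ 1 + Nat.log 3 n := by
    rw [← Nat.factorization_def _ hp,
      Nat.factorization_prod (fun k _ => by omega), Finset.sum_apply']
    by_cases hex : ∃ k₀ ∈ Icc 2 (p - 1), p ∣ k₀ * n + 1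
    · obtain ⟨k₀, hk₀mem, hk₀dvd⟩ := hex
      have hpn : ¬ p ∣ n := by
        intro hpn
        have h1 : p ∣ 1 := (Nat.dvd_add_right (hpn.mul_left k₀)).mp hk₀dvd
        have := Nat.dvd_one.mp h1
        omega
      have hsum : ∑ k ∈ Icc 2 (p - 1), (k * n + 1).factorization p
          = (k₀ * n + 1).factorization p := by
        apply Finset.sum_eq_single_of_mem k₀ hk₀mem
        intro k hkmem hkne
        rw [Nat.factorization_eq_zero_iff]
        right; left
        intro hkdvd
        have hk1 := Finset.mem_Icc.mp hkmem
        have hk2 := Finset.mem_Icc.mp hk₀mem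
        have hz : (p : ℤ) ∣ ((k : ℤ) - k₀) * n := by
          have d1 : (p : ℤ) ∣ (k : ℤ) * n + 1 := by exact_mod_cast Int.natCast_dvd_natCast.mpr hkdvd
          have d2 : (p : ℤ) ∣ (k₀ : ℤ) * n + 1 := by exact_mod_cast Int.natCast_dvd_natCast.mpr hk₀dvd
          have hsub := dvd_sub d1 d2
          have heq : ((k : ℤ) * n + 1) - ((k₀ : ℤ) * n + 1) = ((k : ℤ) - k₀) * n := by ring
          rwa [heq] at hsub
        have hz2 : (p : ℤ) ∣ ((k : ℤ) - k₀) := by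
          rcases (Int.Prime.dvd_mul' (by exact_mod_cast hp) hz) with h | h
          · exact h
          · exact absurd (by exact_mod_cast h) hpn
        have hd : p ∣ ((k : ℤ) - k₀).natAbs := by
          have := Int.natAbs_dvd_natAbs.mpr hz2
          rwa [Int.natAbs_natCast] at this
        have hne0 : ((k : ℤ) - k₀).natAbs ≠ 0 := by omega
        have := Nat.le_of_dvd (by omega) hd
        omega
      rw [hsum]
      set v := (k₀ * n + 1).factorization p with hv
      rcases Nat.eq_zero_or_pos v with h0 | hpos
      · omega
      · have hdvd : p ^ v ∣ k₀ * n + 1 := by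
          rw [hv, Nat.factorization_def _ hp]; exact pow_padicValNat_dvd
        have hle : p ^ v ≤ k₀ * n + 1 := Nat.le_of_dvd (by omega) hdvd
        have hk2 := Finset.mem_Icc.mp hk₀mem
        have hub : k₀ * n + 1 ≤ p * n := by
          have hm : k₀ * n ≤ (p - 1) * n := Nat.mul_le_mul_right n hk2.2
          have hpn1 : (p - 1) * n + n = p * n := by
            have hq : p - 1 + 1 = p := by omega
            calc (p - 1) * n + n = ((p - 1) + 1) * n := by ring
              _ = p * n := by rw [hq]
          omega
        have hexp : p ^ v = p ^ (v - 1) * p := by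
          rw [← pow_succ]; congr 1; omega
        have hstep : p ^ (v - 1) ≤ n := by
          have hmul : p ^ (v - 1) * p ≤ n * p := by
            rw [← hexp]
            calc p ^ v ≤ k₀ * n + 1 := hle
              _ ≤ p * n := hub
              _ = n * p := Nat.mul_comm p n
          exact Nat.le_of_mul_le_mul_right hmul hp.pos
        have h3 : 3 ^ (v - 1) ≤ n := le_trans (Nat.pow_le_pow_left hp3 _) hstep
        have := (Nat.le_log_iff_pow_le (b := 3) (by norm_num) (by omega)).mpr h3
        omega
    · push_neg at hex
      have hz : ∑ k ∈ Icc 2 (p - 1), (k * n + 1).factorization p = 0 := by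
        apply Finset.sum_eq_zero
        intro k hk
        rw [Nat.factorization_eq_zero_iff]
        right; left
        exact hex k hk
      omega
  have := arith n hn
  omega
end

section
/- Let n be a natural number, let j be a natural number with j ≤ ⌊n/2⌋, and let a, b be integers. Then C(n-j,j) · ∑_{v=0}^{n-2j} C(n-2j,v) · C(n,j+v) · a^{n-j-v} · b^{j+v} = C(n,j) · ∑_{k=0}^{⌊(n-2j)/2⌋} C(n-j,k) · C(n-j-k,j+k) · (ab)^{j+k} · (a+b)^{n-2j-2k}. -/
open Finset

lemma L1 (m j v k : ℕ) (hkv : k ≤ v) (hk : k + v ≤ m) :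
    (m+j).choose k * ((m+j-k).choose (j+k)) * ((m-2*k).choose (v-k))
      = (m+j).choose v * (v.choose k) * ((m+j-v).choose (j+k)) := by
  have e1 : m + j - k - (j+k) = m - 2*k := by omega
  have e2 : m - 2*k - (v-k) = m - (k+v) := by omega
  have e3 : m + j - v - (j+k) = m - (k+v) := by omega
  have h1 : k ≤ m + j := by omega
  have h2 : j + k ≤ m + j - k := by omega
  have h3 : v - k ≤ m - 2*k := by omega
  have h4 : v ≤ m + j := by omega
  have h5 : j + k ≤ m + j - v := by omega
  have key : (((m+j).choose k * ((m+j-k).choose (j+k)) * ((m-2*k).choose (v-k)) : ℕ) : ℚ)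
      = (((m+j).choose v * (v.choose k) * ((m+j-v).choose (j+k)) : ℕ) : ℚ) := by
    push_cast
    rw [Nat.cast_choose ℚ h1, Nat.cast_choose ℚ h2, Nat.cast_choose ℚ h3,
      Nat.cast_choose ℚ h4, Nat.cast_choose ℚ hkv, Nat.cast_choose ℚ h5, e1, e2, e3]
    have f := fun q : ℕ => Nat.cast_ne_zero (R := ℚ) |>.mpr q.factorial_ne_zero
    field_simp
  exact_mod_cast key

lemma L3 (m j v : ℕ) (hv : v ≤ m) :
    (m+2*j).choose j * ((m+j).choose v) * ((m+j).choose (j+v))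
      = (m+j).choose j * (m.choose v) * ((m+2*j).choose (j+v)) := by
  have e1 : m + 2*j - j = m + j := by omega
  have e2 : m + j - (j+v) = m - v := by omega
  have e3 : m + j - j = m := by omega
  have e4 : m + 2*j - (j+v) = m + j - v := by omega
  have h1 : j ≤ m + 2*j := by omega
  have h2 : v ≤ m + j := by omega
  have h3 : j + v ≤ m + j := by omega
  have h4 : j ≤ m + j := by omega
  have h5 : j + v ≤ m + 2*j := by omega
  have key : (((m+2*j).choose j * ((m+j).choose v) * ((m+j).choose (j+v)) : ℕ) : ℚ)
      = (((m+j).choose j * (m.choose v) * ((m+2*j).choose (j+v)) : ℕ) : ℚ) := by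
    push_cast
    rw [Nat.cast_choose ℚ h1, Nat.cast_choose ℚ h2, Nat.cast_choose ℚ h3,
      Nat.cast_choose ℚ h4, Nat.cast_choose ℚ hv, Nat.cast_choose ℚ h5, e1, e2, e3, e4]
    field_simp
  exact_mod_cast key

lemma L2 (m j v : ℕ) (hv : v ≤ m) :
    ∑ k ∈ range (min v (m-v) + 1), v.choose k * ((m+j-v).choose (j+k))
      = (m+j).choose (j+v) := by
  have hvdm : (m+j).choose (j+v)
      = ∑ p ∈ range (j+v+1), v.choose p * ((m+j-v).choose (j+v-p)) := by
    conv_lhs => rw [show m+j = v+(m+j-v) by omega]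
    rw [Nat.add_choose_eq, Finset.Nat.sum_antidiagonal_eq_sum_range_succ_mk]
  have h2 : (m+j).choose (j+v)
      = ∑ p ∈ range (v+1), v.choose p * ((m+j-v).choose (j+v-p)) := by
    rw [hvdm]
    symm
    apply Finset.sum_subset
    · apply Finset.range_subset_range.2; omega
    · intro p hp hp2
      simp only [mem_range] at hp hp2
      rw [Nat.choose_eq_zero_of_lt (show v < p by omega)]
      ring
  have h3 : ∑ p ∈ range (v+1), v.choose p * ((m+j-v).choose (j+v-p))
      = ∑ k ∈ range (v+1), v.choose k * ((m+j-v).choose (j+k)) := by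
    rw [← Finset.sum_range_reflect]
    apply Finset.sum_congr rfl
    intro k hk
    simp only [mem_range] at hk
    rw [show v + 1 - 1 - k = v - k by omega, Nat.choose_symm (by omega),
      show j + v - (v - k) = j + k by omega]
  have hext : ∑ k ∈ range (min v (m-v) + 1), v.choose k * ((m+j-v).choose (j+k))
      = ∑ k ∈ range (v+1), v.choose k * ((m+j-v).choose (j+k)) := by
    apply Finset.sum_subset
    · apply Finset.range_subset_range.2; omega
    · intro k hk hk2
      simp only [mem_range] at hk hk2
      rw [Nat.choose_eq_zero_of_lt (show m+j-v < j+k by omega)]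
      ring
  rw [hext, h2, h3]

lemma coeff' (m j v : ℕ) (hv : v ≤ m) :
    (m+j).choose j * (m.choose v) * ((m+2*j).choose (j+v))
      = (m+2*j).choose j * ∑ k ∈ range (min v (m-v) + 1),
          (m+j).choose k * ((m+j-k).choose (j+k)) * ((m-2*k).choose (v-k)) := by
  have hs : ∑ k ∈ range (min v (m-v) + 1),
        (m+j).choose k * ((m+j-k).choose (j+k)) * ((m-2*k).choose (v-k))
      = (m+j).choose v * ((m+j).choose (j+v)) := by
    rw [Finset.sum_congr rfl (fun k hk => by
      simp only [mem_range] at hk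
      exact L1 m j v k (by omega) (by omega))]
    rw [show ∀ s : Finset ℕ, ∑ k ∈ s, (m+j).choose v * (v.choose k) * ((m+j-v).choose (j+k))
        = (m+j).choose v * ∑ k ∈ s, (v.choose k) * ((m+j-v).choose (j+k)) from
      fun s => by rw [Finset.mul_sum]; exact Finset.sum_congr rfl fun k _ => by ring]
    rw [L2 m j v hv]
  rw [hs, ← mul_assoc, L3 m j v hv]

lemma main (m j : ℕ) (a b : ℤ) :
    ((m+j).choose j : ℤ) *
      ∑ v ∈ range (m + 1),
        ((m.choose v : ℕ) : ℤ) * (((m+2*j).choose (j + v) : ℕ) : ℤ) * a ^ (m + j - v) * b ^ (j + v) =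
    (((m+2*j).choose j : ℕ) : ℤ) *
      ∑ k ∈ range (m / 2 + 1),
        (((m+j).choose k : ℕ) : ℤ) * (((m+j-k).choose (j + k) : ℕ) : ℤ) * (a * b) ^ (j + k) *
          (a + b) ^ (m - 2 * k) := by
  have lhs_eq : ((m+j).choose j : ℤ) *
      ∑ v ∈ range (m + 1),
        ((m.choose v : ℕ) : ℤ) * (((m+2*j).choose (j + v) : ℕ) : ℤ) * a ^ (m + j - v) * b ^ (j + v)
      = ∑ p ∈ (range (m+1)).sigma (fun v => range (min v (m-v) + 1)),
          (((m+2*j).choose j : ℕ) : ℤ) * ((m+j).choose p.2 : ℕ) * (((m+j-p.2).choose (j+p.2) : ℕ) : ℤ)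
            * (((m-2*p.2).choose (p.1-p.2) : ℕ) : ℤ) * a ^ (m+j-p.1) * b ^ (j+p.1) := by
    rw [Finset.mul_sum, Finset.sum_sigma]
    apply Finset.sum_congr rfl
    intro v hv
    have hv' : v ≤ m := by simpa [Nat.lt_succ_iff] using hv
    have hc := coeff' m j v hv'
    have hc' : (((m+j).choose j : ℕ) : ℤ) * (m.choose v : ℕ) * (((m+2*j).choose (j+v) : ℕ) : ℤ)
        = (((m+2*j).choose j : ℕ) : ℤ) * ∑ k ∈ range (min v (m-v) + 1),
            (((m+j).choose k : ℕ) : ℤ) * (((m+j-k).choose (j+k) : ℕ) : ℤ)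
              * (((m-2*k).choose (v-k) : ℕ) : ℤ) := by
      exact_mod_cast congrArg (Nat.cast : ℕ → ℤ) hc
    calc ((m+j).choose j : ℤ) * ((m.choose v : ℕ) * (((m+2*j).choose (j + v) : ℕ) : ℤ)
            * a ^ (m + j - v) * b ^ (j + v))
        = (((m+j).choose j : ℤ) * (m.choose v : ℕ) * (((m+2*j).choose (j+v) : ℕ) : ℤ))
            * (a ^ (m+j-v) * b ^ (j+v)) := by ring
      _ = ((((m+2*j).choose j : ℕ) : ℤ) * ∑ k ∈ range (min v (m-v) + 1),
            (((m+j).choose k : ℕ) : ℤ) * (((m+j-k).choose (j+k) : ℕ) : ℤ)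
              * (((m-2*k).choose (v-k) : ℕ) : ℤ)) * (a ^ (m+j-v) * b ^ (j+v)) := by rw [hc']
      _ = ∑ k ∈ range (min v (m-v) + 1),
            (((m+2*j).choose j : ℕ) : ℤ) * ((m+j).choose k : ℕ) * (((m+j-k).choose (j+k) : ℕ) : ℤ)
              * (((m-2*k).choose (v-k) : ℕ) : ℤ) * a ^ (m+j-v) * b ^ (j+v) := by
          rw [Finset.mul_sum, Finset.sum_mul]
          exact Finset.sum_congr rfl fun k _ => by ring
  have rhs_eq : (((m+2*j).choose j : ℕ) : ℤ) *
      ∑ k ∈ range (m / 2 + 1),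
        (((m+j).choose k : ℕ) : ℤ) * (((m+j-k).choose (j + k) : ℕ) : ℤ) * (a * b) ^ (j + k) *
          (a + b) ^ (m - 2 * k)
      = ∑ q ∈ (range (m/2+1)).sigma (fun k => range (m - 2*k + 1)),
          (((m+2*j).choose j : ℕ) : ℤ) * ((m+j).choose q.1 : ℕ) * (((m+j-q.1).choose (j+q.1) : ℕ) : ℤ)
            * (((m-2*q.1).choose q.2 : ℕ) : ℤ) * (a*b) ^ (j+q.1) * a ^ q.2 * b ^ (m-2*q.1-q.2) := by
    rw [Finset.mul_sum, Finset.sum_sigma]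
    apply Finset.sum_congr rfl
    intro k hk
    rw [add_pow]
    simp only [Finset.mul_sum]
    apply Finset.sum_congr rfl
    intro i hi
    ring
  rw [lhs_eq, rhs_eq]
  apply Finset.sum_nbij' (i := fun p => (⟨p.2, m - p.1 - p.2⟩ : Σ _ : ℕ, ℕ))
    (j := fun q => (⟨m - q.1 - q.2, q.1⟩ : Σ _ : ℕ, ℕ))
  · intro p hp
    simp only [mem_sigma, mem_range, Nat.lt_succ_iff, le_min_iff] at hp ⊢
    omega
  · intro q hq
    simp only [mem_sigma, mem_range, Nat.lt_succ_iff, le_min_iff] at hq ⊢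
    omega
  · intro p hp
    obtain ⟨v, k⟩ := p
    simp only [mem_sigma, mem_range, Nat.lt_succ_iff, le_min_iff] at hp
    obtain ⟨h1, h2, h3⟩ := hp
    simp only [Sigma.mk.inj_iff]
    exact ⟨by omega, HEq.rfl⟩
  · intro q hq
    obtain ⟨k, i⟩ := q
    simp only [mem_sigma, mem_range, Nat.lt_succ_iff] at hq
    obtain ⟨h1, h2⟩ := hq
    simp only [Sigma.mk.inj_iff]
    exact ⟨trivial, heq_of_eq (by omega)⟩
  · intro p hp
    obtain ⟨v, k⟩ := p
    simp only [mem_sigma, mem_range, Nat.lt_succ_iff, le_min_iff] at hp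
    obtain ⟨h1, ⟨h2, h3⟩⟩ := hp
    show (((m+2*j).choose j : ℕ) : ℤ) * ((m+j).choose k : ℕ) * (((m+j-k).choose (j+k) : ℕ) : ℤ)
        * (((m-2*k).choose (v-k) : ℕ) : ℤ) * a ^ (m+j-v) * b ^ (j+v)
      = (((m+2*j).choose j : ℕ) : ℤ) * ((m+j).choose k : ℕ) * (((m+j-k).choose (j+k) : ℕ) : ℤ)
        * (((m-2*k).choose (m - v - k) : ℕ) : ℤ) * (a*b) ^ (j+k) * a ^ (m - v - k)
        * b ^ (m-2*k-(m - v - k))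
    rw [show m - v - k = (m - 2*k) - (v - k) by omega,
      Nat.choose_symm (show v - k ≤ m - 2*k by omega)]
    rw [show m - 2*k - (m - 2*k - (v - k)) = v - k by omega]
    rw [mul_pow, show m + j - v = (j + k) + (m - 2*k - (v - k)) by omega,
      show j + v = (j + k) + (v - k) by omega, pow_add, pow_add]
    ring

/-- Eq. (34): the M-sum identity
`M_B(n,j,1;a,b) = C(n,j) ∑_{k=0}^{⌊(n-2j)/2⌋} C(n-j,k) C(n-j-k,j+k) (ab)^{j+k} (a+b)^{n-2j-2k}`,
where `M_B(n,j,1;a,b) = C(n-j,j) ∑_{v=0}^{n-2j} C(n-2j,v) C(n,j+v) a^{n-j-v} b^{j+v}`. -/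
theorem stmt_19 (n j : ℕ) (hj : j ≤ n / 2) (a b : ℤ) :
    ((n - j).choose j : ℤ) *
      ∑ v ∈ range (n - 2 * j + 1),
        ((n - 2 * j).choose v : ℤ) * (n.choose (j + v) : ℤ) * a ^ (n - j - v) * b ^ (j + v) =
    (n.choose j : ℤ) *
      ∑ k ∈ range ((n - 2 * j) / 2 + 1),
        ((n - j).choose k : ℤ) * ((n - j - k).choose (j + k) : ℤ) * (a * b) ^ (j + k) *
          (a + b) ^ (n - 2 * j - 2 * k) := by
  obtain ⟨m, rfl⟩ : ∃ m, n = m + 2 * j := ⟨n - 2 * j, by omega⟩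
  rw [show m + 2 * j - j = m + j by omega, show m + 2 * j - 2 * j = m by omega]
  exact main m j a b
end
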